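/- arXiv:1607.04475 — 2 statements merged into one kernel-verified Lean document; each statement's English description precedes it below -/
import Mathlib

section
/- Let p be a prime, let (X,(x_n)_{n∈ℤ}) be a ℤ-system of order p with shift automorphism t, and let Y ≤ X be a shift-invariant subgroup. Then for every n ∈ ℤ there exists m ∈ ℤ such that Y = Y_{-∞,m} · Y_{n,∞}, i.e. every element of Y is a product of an element of Y ∩ X_{-∞,m} and an element of Y ∩ X_{n,∞}. -/
/-- The subgroup `X_{n,m}` generated by the `x_k` with `n ≤ k ≤ m`. -/
def XIcc {X : Type*} [Group X] (x : ℤ → X) (n m : ℤ) : Subgroup X :=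
  Subgroup.closure (x '' Set.Icc n m)

/-- The subgroup `X_{n,∞}` generated by the `x_k` with `n ≤ k`. -/
def XIci {X : Type*} [Group X] (x : ℤ → X) (n : ℤ) : Subgroup X :=
  Subgroup.closure (x '' Set.Ici n)

/-- The subgroup `X_{-∞,m}` generated by the `x_k` with `k ≤ m`. -/
def XIic {X : Type*} [Group X] (x : ℤ → X) (m : ℤ) : Subgroup X :=
  Subgroup.closure (x '' Set.Iic m)

/-- A ℤ-system of order `p`: a group `X` together with a family `(x_n)_{n ∈ ℤ}` such that
(ZS1) the `x_n` generate `X`, (ZS2) `⟨x_k : n ≤ k ≤ m⟩` has order `p^(m-n+1)`, and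
(ZS3) there is a (shift) automorphism `t` of `X` with `t (x n) = x (n+2)` for all `n`. -/
structure IsZSystem (p : ℕ) {X : Type*} [Group X] (x : ℤ → X) : Prop where
  closure_range : Subgroup.closure (Set.range x) = ⊤
  card_Icc : ∀ n m : ℤ, n ≤ m → Nat.card (XIcc x n m) = p ^ (m - n + 1).toNat
  exists_shift : ∃ t : MulAut X, ∀ n : ℤ, t (x n) = x (n + 2)

/-!
Let `k < n`. Since `X_{k+1,M}` has index `p` in the finite `p`-group `X_{k,M}`, it is normal with
cyclic quotient, so any `z ∈ X_{k,∞} \ X_{k+1,∞}` generates `X_{k,∞}` modulo `X_{k+1,∞}`.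
Hence if `Y` contains such a `z`, every `y ∈ Y ∩ X_{k,∞}` can be pushed into `Y ∩ X_{k+1,∞}` by
multiplying with a power of `z`; repeating this from the level of `y` up to `n` gives the
decomposition, provided the `z` can be taken in a fixed `X_{-∞,m}`. The shift `t` moves such
elements two levels up or down, so it suffices to bound them at the two levels `n - 1`, `n - 2`.
-/

theorem Subgroup.exists_zpow_inv_mul_mem_of_index_eq_minFac {G : Type*} [Group G]
    {H : Subgroup G} (hH : H.index = (Nat.card G).minFac) {z : G} (hz : z ∉ H) (y : G) :
    ∃ r : ℤ, (z ^ r)⁻¹ * y ∈ H := by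
  have hprime : H.index.Prime := by
    rw [hH]
    refine Nat.minFac_prime fun hG => hz ?_
    rw [hG, Nat.minFac_one, Subgroup.index_eq_one] at hH
    exact hH ▸ mem_top z
  have := H.normal_of_index_eq_minFac_card hH
  have : Fact (Nat.card (G ⧸ H)).Prime := ⟨hprime⟩
  have hz' : (z : G ⧸ H) ≠ 1 := by rwa [Ne, QuotientGroup.eq_one_iff]
  obtain ⟨r, hr⟩ := mem_zpowers_iff.mp
    (zpowers_eq_top_of_prime_card rfl hz' ▸ mem_top (y : G ⧸ H))
  exact ⟨r, QuotientGroup.eq.mp (by rw [QuotientGroup.mk_zpow, hr])⟩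

section Intervals

variable {X : Type*} [Group X] (x : ℤ → X)

theorem XIcc_mono {n m n' m' : ℤ} (hn : n' ≤ n) (hm : m ≤ m') : XIcc x n m ≤ XIcc x n' m' :=
  Subgroup.closure_mono (Set.image_mono (Set.Icc_subset_Icc hn hm))

theorem XIci_mono {n n' : ℤ} (h : n' ≤ n) : XIci x n ≤ XIci x n' :=
  Subgroup.closure_mono (Set.image_mono (Set.Ici_subset_Ici.2 h))

theorem XIcc_le_XIci (n m : ℤ) : XIcc x n m ≤ XIci x n :=
  Subgroup.closure_mono (Set.image_mono Set.Icc_subset_Ici_self)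

theorem XIcc_le_XIic (n m : ℤ) : XIcc x n m ≤ XIic x m :=
  Subgroup.closure_mono (Set.image_mono Set.Icc_subset_Iic_self)

theorem XIci_eq_iSup_XIcc (n : ℤ) : XIci x n = ⨆ m, XIcc x n m :=
  le_antisymm
    ((Subgroup.closure_le _).2 <| by
      rintro _ ⟨k, hk, rfl⟩
      exact le_iSup (XIcc x n) k (Subgroup.subset_closure ⟨k, ⟨hk, le_rfl⟩, rfl⟩))
    (iSup_le (XIcc_le_XIci x n))

theorem exists_mem_XIcc_of_mem_XIci {n : ℤ} {g : X} (hg : g ∈ XIci x n) :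
    ∃ m, g ∈ XIcc x n m := by
  rw [XIci_eq_iSup_XIcc] at hg
  exact (Subgroup.mem_iSup_of_directed (Monotone.directed_le fun _ _ h => XIcc_mono x le_rfl h)).1 hg

theorem exists_mem_XIci (hx : Subgroup.closure (Set.range x) = ⊤) (g : X) :
    ∃ n, g ∈ XIci x n := by
  have htop : ⊤ ≤ ⨆ n, XIci x n := by
    rw [← hx, Subgroup.closure_le]
    rintro _ ⟨k, rfl⟩
    exact le_iSup (XIci x) k (Subgroup.subset_closure ⟨k, Set.mem_Ici.2 le_rfl, rfl⟩)
  exact (Subgroup.mem_iSup_of_directed (Antitone.directed_le fun _ _ h => XIci_mono x h)).1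
    (htop (Subgroup.mem_top g))

theorem map_XIcc (e : MulAut X) {c : ℤ} (he : ∀ i, e (x i) = x (i + c)) (n m : ℤ) :
    (XIcc x n m).map e.toMonoidHom = XIcc x (n + c) (m + c) := by
  rw [XIcc, XIcc, MonoidHom.map_closure, Set.image_image, ← Set.image_add_const_Icc,
    Set.image_image]
  exact congrArg _ (Set.image_congr fun i _ => he i)

theorem map_XIci (e : MulAut X) {c : ℤ} (he : ∀ i, e (x i) = x (i + c)) (n : ℤ) :
    (XIci x n).map e.toMonoidHom = XIci x (n + c) := by
  rw [XIci, XIci, MonoidHom.map_closure, Set.image_image, ← Set.image_add_const_Ici,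
    Set.image_image]
  exact congrArg _ (Set.image_congr fun i _ => he i)

end Intervals

theorem exists_mul_of_forall_exists_inv_mul_mem_succ {G : Type*} [Group G] (A : Subgroup G)
    (S : ℤ → Set G) {n : ℤ} (hS : ∀ k < n, ∀ y ∈ S k, ∃ a ∈ A, a⁻¹ * y ∈ S (k + 1)) :
    ∀ k ≤ n, ∀ y ∈ S k, ∃ a ∈ A, ∃ b ∈ S n, y = a * b := by
  intro k hk
  induction k, hk using Int.leInductionDown with
  | base => exact fun y hy => ⟨1, one_mem A, y, hy, (one_mul y).symm⟩
  | pred k hk ih =>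
    intro y hy
    obtain ⟨a, ha, hay⟩ := hS (k - 1) (by omega) y hy
    obtain ⟨a', ha', b, hb, h⟩ := ih (a⁻¹ * y) (by rwa [sub_add_cancel] at hay)
    exact ⟨a * a', mul_mem ha ha', b, hb, by rw [mul_assoc, ← h, mul_inv_cancel_left]⟩

section ZSystem

variable {X : Type*} [Group X] (x : ℤ → X)

theorem exists_zpow_inv_mul_mem_XIci_succ {p : ℕ} (hp : p.Prime) (hX : IsZSystem p x) {k : ℤ}
    {y z : X} (hy : y ∈ XIci x k) (hz : z ∈ XIci x k) (hz' : z ∉ XIci x (k + 1)) :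
    ∃ r : ℤ, (z ^ r)⁻¹ * y ∈ XIci x (k + 1) := by
  obtain ⟨M₁, hy⟩ := exists_mem_XIcc_of_mem_XIci x hy
  obtain ⟨M₂, hz⟩ := exists_mem_XIcc_of_mem_XIci x hz
  set M := max (max M₁ M₂) (k + 1)
  replace hy := XIcc_mono x le_rfl (by omega : M₁ ≤ M) hy
  replace hz := XIcc_mono x le_rfl (by omega : M₂ ≤ M) hz
  have hindex : ((XIcc x (k + 1) M).subgroupOf (XIcc x k M)).index =
      (Nat.card (XIcc x k M)).minFac := by
    have hcard := Subgroup.card_mul_index ((XIcc x (k + 1) M).subgroupOf (XIcc x k M))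
    rw [Nat.card_congr (Subgroup.subgroupOfEquivOfLe (XIcc_mono x (by omega) le_rfl)).toEquiv,
      hX.card_Icc _ _ (by omega), hX.card_Icc _ _ (by omega),
      show (M - k + 1).toNat = (M - (k + 1) + 1).toNat + 1 by omega, pow_succ] at hcard
    rw [hX.card_Icc k M (by omega), hp.pow_minFac (by omega)]
    exact Nat.eq_of_mul_eq_mul_left (pow_pos hp.pos _) hcard
  obtain ⟨r, hr⟩ := Subgroup.exists_zpow_inv_mul_mem_of_index_eq_minFac hindex (z := ⟨z, hz⟩)
    (fun h => hz' (XIcc_le_XIci x _ _ (Subgroup.mem_subgroupOf.1 h))) ⟨y, hy⟩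
  exact ⟨r, XIcc_le_XIci x _ _ (Subgroup.mem_subgroupOf.1 hr)⟩

variable {x} {t : MulAut X} {Y : Subgroup X}

theorem inf_XIcc_le_XIci_succ_shift_iff (ht : ∀ n, t (x n) = x (n + 2))
    (hY : Y.map t.toMonoidHom = Y) (j k M : ℤ) :
    Y ⊓ XIcc x (k + 2 * j) (M + 2 * j) ≤ XIci x (k + 2 * j + 1) ↔
      Y ⊓ XIcc x k M ≤ XIci x (k + 1) := by
  have step : ∀ k M, Y ⊓ XIcc x (k + 2) (M + 2) ≤ XIci x (k + 2 + 1) ↔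
      Y ⊓ XIcc x k M ≤ XIci x (k + 1) := fun k M => by
    rw [← Subgroup.map_le_map_iff_of_injective (f := t.toMonoidHom) t.injective
        (H := Y ⊓ XIcc x k M),
      Subgroup.map_inf_eq _ _ _ t.injective, hY, map_XIcc x t ht, map_XIci x t ht,
      add_right_comm k 1 2]
  induction j using Int.induction_on with
  | zero => simp
  | succ j ih =>
    have h := step (k + 2 * j) (M + 2 * j)
    rw [show k + 2 * j + 2 = k + 2 * (j + 1) by ring,
      show M + 2 * j + 2 = M + 2 * (j + 1) by ring] at h
    exact h.trans ih
  | pred j ih =>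
    have h := step (k + 2 * (-j - 1)) (M + 2 * (-j - 1))
    rw [show k + 2 * (-j - 1) + 2 = k + 2 * -j by ring,
      show M + 2 * (-j - 1) + 2 = M + 2 * -j by ring] at h
    exact h.symm.trans ih

theorem exists_uniform_XIcc_bound (ht : ∀ n, t (x n) = x (n + 2))
    (hY : Y.map t.toMonoidHom = Y) (n : ℤ) :
    ∃ m, ∀ k < n, ∀ M, ¬ Y ⊓ XIcc x k M ≤ XIci x (k + 1) →
      ¬ Y ⊓ XIcc x k m ≤ XIci x (k + 1) := by
  have bound : ∀ k, ∃ B, ∀ M, ¬ Y ⊓ XIcc x k M ≤ XIci x (k + 1) →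
      ¬ Y ⊓ XIcc x k B ≤ XIci x (k + 1) := fun k =>
    (em (∃ M, ¬ Y ⊓ XIcc x k M ≤ XIci x (k + 1))).elim
      (fun ⟨B, hB⟩ => ⟨B, fun _ _ => hB⟩) (fun h => ⟨0, fun M hM => (h ⟨M, hM⟩).elim⟩)
  choose B hB using bound
  refine ⟨max (B (n - 1)) (B (n - 2)), fun k hk M hM => ?_⟩
  -- `k₀ ∈ {n - 1, n - 2}` is the level of the same parity as `k`
  set q := (n - 1 - k) / 2
  set k₀ := k + 2 * q
  have hk₀ : B k₀ ≤ max (B (n - 1)) (B (n - 2)) := by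
    rcases (by omega : k₀ = n - 1 ∨ k₀ = n - 2) with h | h <;> rw [h] <;> simp
  have h₀ := hB k₀ (M + 2 * q)
    (by rwa [inf_XIcc_le_XIci_succ_shift_iff ht hY])
  have h₁ : ¬ Y ⊓ XIcc x k (B k₀ - 2 * q) ≤ XIci x (k + 1) := by
    rwa [← inf_XIcc_le_XIci_succ_shift_iff ht hY q, sub_add_cancel]
  exact fun hle => h₁ ((inf_le_inf_left _ (XIcc_mono x le_rfl (by omega))).trans hle)

theorem exists_inv_mul_mem_inf_XIci_succ {p : ℕ} (hp : p.Prime) (hX : IsZSystem p x)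
    {k m : ℤ} (hm : ∀ M, ¬ Y ⊓ XIcc x k M ≤ XIci x (k + 1) → ¬ Y ⊓ XIcc x k m ≤ XIci x (k + 1))
    {y : X} (hy : y ∈ Y ⊓ XIci x k) : ∃ a ∈ Y ⊓ XIic x m, a⁻¹ * y ∈ Y ⊓ XIci x (k + 1) := by
  by_cases hy' : y ∈ XIci x (k + 1)
  · exact ⟨1, one_mem _, by simpa using And.intro hy.1 hy'⟩
  obtain ⟨M, hyM⟩ := exists_mem_XIcc_of_mem_XIci x hy.2
  obtain ⟨z, ⟨hzY, hzm⟩, hz'⟩ :=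
    SetLike.not_le_iff_exists.1 (hm M fun h => hy' (h ⟨hy.1, hyM⟩))
  obtain ⟨r, hr⟩ := exists_zpow_inv_mul_mem_XIci_succ x hp hX hy.2 (XIcc_le_XIci x k m hzm) hz'
  have hzr : z ^ r ∈ Y ⊓ XIic x m := zpow_mem (Subgroup.mem_inf.2 ⟨hzY, XIcc_le_XIic x k m hzm⟩) r
  exact ⟨z ^ r, hzr, Y.mul_mem (Y.inv_mem hzr.1) hy.1, hr⟩

end ZSystem

/-- For a shift-invariant subgroup `Y` of a ℤ-system of prime order and every `n ∈ ℤ`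
there is `m ∈ ℤ` with `Y = Y_{-∞,m} · Y_{n,∞}`: every element of `Y` is a product of an
element of `Y ∩ X_{-∞,m}` and an element of `Y ∩ X_{n,∞}`. -/
theorem decompose_shift_invariant (p : ℕ) (hp : p.Prime) {X : Type*} [Group X]
    (x : ℤ → X) (hX : IsZSystem p x)
    (t : MulAut X) (ht : ∀ n : ℤ, t (x n) = x (n + 2))
    (Y : Subgroup X) (hY : Subgroup.map t.toMonoidHom Y = Y) :
    ∀ n : ℤ, ∃ m : ℤ, ∀ y ∈ Y,
      ∃ a ∈ Y ⊓ XIic x m, ∃ b ∈ Y ⊓ XIci x n, y = a * b := by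
  intro n
  obtain ⟨m, hm⟩ := exists_uniform_XIcc_bound ht hY n
  refine ⟨m, fun y hy => ?_⟩
  obtain ⟨k, hk⟩ := exists_mem_XIci x hX.closure_range y
  exact exists_mul_of_forall_exists_inv_mul_mem_succ (Y ⊓ XIic x m) (fun k => Y ⊓ XIci x k)
    (fun k hk _ hy => exists_inv_mul_mem_inf_XIci_succ hp hX (hm k hk) hy)
    (min k n) (min_le_right k n) y ⟨hy, XIci_mono x (min_le_left k n) hk⟩
end

section
/- Let p be a prime and let (X,(x_n)_{n∈ℤ}) be a ℤ-system of order p. Then for every k ∈ ℕ, the index of the k-th derived subgroup X^(k) in X is at least p^k. -/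
/-!
`X` is a `p`-group: every element lies in some window `X_{-s,s}`, of order `p^(2s+1)`. So each
step `X^(j+1) ≤ X^(j)` of finite index has `p`-power index, and it suffices that no characteristic
subgroup `N` of finite index is perfect.

Suppose `N` is. Finite index and the shift give `S` with `N X_{a,b} = X` whenever `b - a ≥ S`, so
`|N ∩ X_{a,b}| = p^(b-a+1) / [X : N]`; hence `N ∩ X_{a+1,b}` is a maximal subgroup of
`N ∩ X_{a,b}`, and `N ∩ X_{a,b}` is generated by its subwindows of length `S + 2`. Perfectness,
local finiteness and the shift then give a uniform `r` with
`N ∩ X_{a,b} ≤ [N ∩ X_{a-r,b+r}, N ∩ X_{a-r,b+r}]`. Iterating `I` times with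
`[γ_i P, γ_j P] ≤ γ_(i+j+1) P` puts the nontrivial group `N ∩ X_{0,S+1}` inside `γ_(2^I-1) P` for a
`p`-group `P` of order dividing `p^(2Ir+S+2)`, which is trivial once `2^I > 2Ir + S + 2`.
-/

namespace Subgroup

variable {G : Type*} [Group G]

theorem card_mul_relIndex {H K : Subgroup G} (h : H ≤ K) :
    Nat.card H * H.relIndex K = Nat.card K := by
  rw [relIndex, ← Nat.card_congr (subgroupOfEquivOfLe h).toEquiv, card_mul_index]

theorem relIndex_eq_of_card_eq_mul {H K : Subgroup G} (h : H ≤ K) (hH : Nat.card H ≠ 0)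
    {n : ℕ} (hK : Nat.card K = n * Nat.card H) : H.relIndex K = n := by
  have := card_mul_relIndex h
  rw [hK, mul_comm n] at this
  exact Nat.eq_of_mul_eq_mul_left (Nat.pos_of_ne_zero hH) this

theorem prime_dvd_relIndex {p n : ℕ} (hp : p.Prime) {H K : Subgroup G}
    (hHK : H.relIndex K ∣ p ^ n) (h : ¬K ≤ H) : p ∣ H.relIndex K := by
  obtain ⟨_ | m, -, hm⟩ := (Nat.dvd_prime_pow hp).1 hHK
  · exact absurd (relIndex_eq_one.1 hm) h
  · exact hm ▸ dvd_pow_self p m.succ_ne_zero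

theorem le_or_le_of_relIndex_prime {D C A : Subgroup G} (hDC : D ≤ C) (hCA : C ≤ A)
    (hp : (D.relIndex A).Prime) : C ≤ D ∨ A ≤ C := by
  rw [← relIndex_mul_relIndex D C A hDC hCA] at hp
  rcases Nat.prime_mul_iff.1 hp with ⟨-, h⟩ | ⟨-, h⟩
  · exact Or.inr (relIndex_eq_one.1 h)
  · exact Or.inl (relIndex_eq_one.1 h)

theorem card_inf_mul_index_of_sup_eq_top {N H : Subgroup G} [N.Normal] (h : N ⊔ H = ⊤) :
    Nat.card (N ⊓ H : Subgroup G) * N.index = Nat.card H := by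
  rw [← card_mul_relIndex (inf_le_right : N ⊓ H ≤ H), inf_relIndex_right, ← relIndex_sup_left, h,
    relIndex_top_right]

theorem exists_le_of_le_iSup {A : Subgroup G} [Finite A] {F : ℕ → Subgroup G} (hF : Monotone F)
    (h : A ≤ ⨆ s, F s) : ∃ s, A ≤ F s := by
  choose f hf using fun g : A => (mem_iSup_of_directed hF.directed_le).1 (h g.2)
  obtain ⟨s, hs⟩ := Finite.exists_le f
  exact ⟨s, fun g hg => hF (hs ⟨g, hg⟩) (hf ⟨g, hg⟩)⟩

theorem commutator_iSup_le_of_monotone {F : ℕ → Subgroup G} (hF : Monotone F) :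
    ⁅⨆ s, F s, ⨆ s, F s⁆ ≤ ⨆ s, ⁅F s, F s⁆ := by
  rw [commutator_le]
  intro g hg h hh
  obtain ⟨s, hs⟩ := (mem_iSup_of_directed hF.directed_le).1 hg
  obtain ⟨s', hs'⟩ := (mem_iSup_of_directed hF.directed_le).1 hh
  exact le_iSup (fun s => ⁅F s, F s⁆) (max s s')
    (commutator_mem_commutator (hF (le_max_left s s') hs) (hF (le_max_right s s') hs'))

theorem commutator_commutator_le_of_rotate {H₁ H₂ H₃ K : Subgroup G} [K.Normal]
    (h1 : ⁅⁅H₂, H₃⁆, H₁⁆ ≤ K) (h2 : ⁅⁅H₃, H₁⁆, H₂⁆ ≤ K) : ⁅⁅H₁, H₂⁆, H₃⁆ ≤ K := by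
  simp only [← QuotientGroup.ker_mk' K, ← map_eq_bot_iff, map_commutator] at h1 h2 ⊢
  exact commutator_commutator_eq_bot_of_rotate h1 h2

theorem commutator_top_lowerCentralSeries_le (a b : ℕ) :
    ⁅(⊤ : Subgroup G).lowerCentralSeries a, (⊤ : Subgroup G).lowerCentralSeries b⁆ ≤
      (⊤ : Subgroup G).lowerCentralSeries (a + b + 1) := by
  induction b generalizing a with
  | zero => exact le_rfl
  | succ b ih =>
    rw [lowerCentralSeries_succ, commutator_comm]
    refine commutator_commutator_le_of_rotate ?_ ?_
    · rw [commutator_comm ⊤, ← lowerCentralSeries_succ,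
        show a + (b + 1) + 1 = a + 1 + b + 1 by omega]
      exact ih (a + 1)
    · exact commutator_mono (ih a) le_rfl

theorem commutator_lowerCentralSeries_le (S : Subgroup G) (a b : ℕ) :
    ⁅S.lowerCentralSeries a, S.lowerCentralSeries b⁆ ≤ S.lowerCentralSeries (a + b + 1) := by
  simpa only [map_commutator, top_subtype_lowerCentralSeries] using
    map_mono (f := S.subtype) (commutator_top_lowerCentralSeries_le a b)

theorem lowerCentralSeries_eq_bot_of_succ_eq {S : Subgroup G} [Group.IsNilpotent S] {j : ℕ}
    (h : S.lowerCentralSeries (j + 1) = S.lowerCentralSeries j) : S.lowerCentralSeries j = ⊥ := by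
  obtain ⟨n, hn⟩ := (isNilpotent_iff_lowerCentralSeries S).1 ‹_›
  have hconst : ∀ m ≥ j, S.lowerCentralSeries m = S.lowerCentralSeries j := by
    intro m hm
    induction m, hm using Nat.le_induction with
    | base => rfl
    | succ m _ ih => rw [lowerCentralSeries_succ, ih, ← lowerCentralSeries_succ, h]
  rw [← hconst (max n j) (le_max_right n j), eq_bot_iff, ← hn]
  exact S.lowerCentralSeries_antitone (le_max_left n j)

theorem lowerCentralSeries_eq_bot_of_card_dvd {p n : ℕ} (hp : p.Prime) {S : Subgroup G}
    (hS : Nat.card S ∣ p ^ n) : S.lowerCentralSeries n = ⊥ := by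
  have : Fact p.Prime := ⟨hp⟩
  have : Finite S :=
    Nat.finite_of_card_ne_zero (ne_zero_of_dvd_ne_zero (pow_ne_zero n hp.ne_zero) hS)
  have : Group.IsNilpotent S := (IsPGroup.of_card_dvd_pow hS).isNilpotent
  -- each strict step of the series divides the order by at least `p`
  have key : ∀ j, S.lowerCentralSeries j = ⊥ ∨
      Nat.card (S.lowerCentralSeries j) * p ^ j ∣ p ^ n := by
    intro j
    induction j with
    | zero => exact Or.inr (by simpa using hS)
    | succ j ih =>
      have hle := S.lowerCentralSeries_antitone j.le_succ
      by_cases heq : S.lowerCentralSeries (j + 1) = S.lowerCentralSeries j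
      · exact Or.inl (heq.trans (lowerCentralSeries_eq_bot_of_succ_eq heq))
      rcases ih with hj | hj
      · exact Or.inl (eq_bot_iff.2 (hj ▸ hle))
      have hdvd := prime_dvd_relIndex hp
        ((relIndex_dvd_card _ _).trans ((card_dvd_of_le (S.lowerCentralSeries_le_self j)).trans hS))
        (fun h => heq (le_antisymm hle h))
      refine Or.inr (dvd_trans ?_ hj)
      rw [← card_mul_relIndex hle, pow_succ, mul_comm (p ^ j) p, ← mul_assoc]
      exact mul_dvd_mul_right (mul_dvd_mul_left _ hdvd) _
  refine (key n).elim id fun h => eq_bot_of_card_eq _ ?_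
  exact Nat.dvd_one.1 ((Nat.mul_dvd_mul_iff_right (pow_pos hp.pos n)).1 (by simpa using h))

theorem le_lowerCentralSeries_of_le_commutator {W : ℤ → ℤ → Subgroup G} {L r : ℤ} (hr : 0 ≤ r)
    (hW : ∀ a b, a + L ≤ b → W a b ≤ ⁅W (a - r) (b + r), W (a - r) (b + r)⁆) (i : ℕ) {a b : ℤ}
    (hab : a + L ≤ b) : W a b ≤ (W (a - i * r) (b + i * r)).lowerCentralSeries (2 ^ i - 1) := by
  induction i generalizing a b with
  | zero => simp
  | succ i ih =>
    have hi := ih (a := a - r) (b := b + r) (by linarith)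
    rw [show a - r - i * r = a - (i + 1 : ℕ) * r by push_cast; ring,
      show b + r + i * r = b + (i + 1 : ℕ) * r by push_cast; ring] at hi
    refine (hW a b hab).trans ((commutator_mono hi hi).trans ?_)
    refine (commutator_lowerCentralSeries_le _ _ _).trans
      (lowerCentralSeries_antitone _ (le_of_eq ?_))
    have := Nat.one_le_two_pow (n := i)
    rw [pow_succ]
    omega

end Subgroup

theorem Nat.exists_mul_add_lt_two_pow (c d : ℕ) : ∃ n, c * n + d < 2 ^ n := by
  refine ⟨2 * (2 * c + d + 1), ?_⟩
  have h : 2 * c + d + 1 < 2 ^ (2 * c + d + 1) := Nat.lt_two_pow_self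
  rw [pow_mul']
  nlinarith

section Windows

open Subgroup

variable {X : Type*} [Group X] {x : ℤ → X}

theorem XIcc_mono_s15 {a b a' b' : ℤ} (ha : a' ≤ a) (hb : b ≤ b') : XIcc x a b ≤ XIcc x a' b' :=
  closure_mono (Set.image_mono (Set.Icc_subset_Icc ha hb))

theorem apply_mem_XIcc {a b k : ℤ} (ha : a ≤ k) (hb : k ≤ b) : x k ∈ XIcc x a b :=
  subset_closure ⟨k, ⟨ha, hb⟩, rfl⟩

theorem XIcc_eq_bot {a b : ℤ} (h : b < a) : XIcc x a b = ⊥ := by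
  rw [XIcc, Set.Icc_eq_empty (not_le.2 h), Set.image_empty, Subgroup.closure_empty]

theorem monotone_XIcc_neg_self : Monotone fun s : ℕ => XIcc x (-s) s :=
  fun _ _ h => XIcc_mono_s15 (by omega) (by omega)

theorem map_XIcc_of_apply_eq (e : X ≃* X) {d : ℤ} (he : ∀ n, e (x n) = x (n + d)) (a b : ℤ) :
    (XIcc x a b).map e.toMonoidHom = XIcc x (a + d) (b + d) := by
  rw [XIcc, XIcc, MonoidHom.map_closure, ← Set.image_comp, ← Set.image_add_const_Icc,
    ← Set.image_comp]
  congr 2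
  funext n
  exact he n

theorem map_inf_XIcc_of_apply_eq (N : Subgroup X) [N.Characteristic] (e : X ≃* X) {d : ℤ}
    (he : ∀ n, e (x n) = x (n + d)) (a b : ℤ) :
    (N ⊓ XIcc x a b).map e.toMonoidHom = N ⊓ XIcc x (a + d) (b + d) := by
  rw [map_inf_eq _ _ _ e.injective, characteristic_iff_map_eq.1 ‹_› e,
    map_XIcc_of_apply_eq e he]

theorem commutator_inf_XIcc_mono (N : Subgroup X) {a b a' b' : ℤ} (ha : a' ≤ a) (hb : b ≤ b') :
    ⁅N ⊓ XIcc x a b, N ⊓ XIcc x a b⁆ ≤ ⁅N ⊓ XIcc x a' b', N ⊓ XIcc x a' b'⁆ :=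
  have h := inf_le_inf_left N (XIcc_mono_s15 (x := x) ha hb)
  commutator_mono h h

end Windows

namespace IsZSystem

open Subgroup

variable {p : ℕ} {X : Type*} [Group X] {x : ℤ → X}

theorem iSup_XIcc_neg_self (hX : IsZSystem p x) : ⨆ s : ℕ, XIcc x (-s) s = ⊤ := by
  rw [eq_top_iff, ← hX.closure_range, closure_le]
  rintro _ ⟨k, rfl⟩
  exact le_iSup (fun s : ℕ => XIcc x (-s) s) k.natAbs (apply_mem_XIcc (by omega) (by omega))

theorem exists_mem_XIcc (hX : IsZSystem p x) (g : X) : ∃ s : ℕ, g ∈ XIcc x (-s) s :=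
  (mem_iSup_of_directed monotone_XIcc_neg_self.directed_le).1
    (hX.iSup_XIcc_neg_self ▸ mem_top g)

theorem card_XIcc (hX : IsZSystem p x) {a b : ℤ} (h : a ≤ b + 1) :
    Nat.card (XIcc x a b) = p ^ (b - a + 1).toNat := by
  rcases h.eq_or_lt with rfl | h
  · simp [XIcc_eq_bot (lt_add_one b)]
  · exact hX.card_Icc a b (by omega)

theorem card_XIcc_ne_zero (hX : IsZSystem p x) (hp : p ≠ 0) (a b : ℤ) :
    Nat.card (XIcc x a b) ≠ 0 := by
  rcases lt_or_ge b a with h | h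
  · simp [XIcc_eq_bot h]
  · rw [hX.card_Icc a b h]
    exact pow_ne_zero _ hp

theorem finite_of_le_XIcc (hX : IsZSystem p x) (hp : p ≠ 0) {H : Subgroup X} {a b : ℤ}
    (h : H ≤ XIcc x a b) : Finite H :=
  have : Finite (XIcc x a b) := Nat.finite_of_card_ne_zero (hX.card_XIcc_ne_zero hp a b)
  Finite.of_injective _ (inclusion_injective h)

theorem card_XIcc_eq_mul (hX : IsZSystem p x) {a b : ℤ} (h : a ≤ b) :
    Nat.card (XIcc x a b) = p * Nat.card (XIcc x (a + 1) b) := by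
  rw [hX.card_XIcc (by omega), hX.card_XIcc (by omega), ← pow_succ']
  congr 1
  omega

theorem isPGroup (hX : IsZSystem p x) : IsPGroup p X := by
  intro g
  obtain ⟨s, hs⟩ := hX.exists_mem_XIcc g
  obtain ⟨k, hk⟩ := IsPGroup.of_card (hX.card_Icc _ _ (by omega)) ⟨g, hs⟩
  exact ⟨k, congrArg Subtype.val hk⟩

theorem relIndex_XIcc_succ (hX : IsZSystem p x) (hp : p ≠ 0) {a b : ℤ} (h : a ≤ b) :
    (XIcc x (a + 1) b).relIndex (XIcc x a b) = p :=
  relIndex_eq_of_card_eq_mul (XIcc_mono_s15 (by omega) le_rfl) (hX.card_XIcc_ne_zero hp _ _)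
    (hX.card_XIcc_eq_mul h)

theorem apply_notMem_XIcc_succ (hX : IsZSystem p x) (hp : p.Prime) {a b : ℤ} (h : a ≤ b) :
    x a ∉ XIcc x (a + 1) b := by
  intro hmem
  have hle : XIcc x a b ≤ XIcc x (a + 1) b := by
    rw [XIcc, closure_le]
    rintro _ ⟨k, hk, rfl⟩
    rcases hk.1.eq_or_lt with rfl | hlt
    · exact hmem
    · exact apply_mem_XIcc (by omega) hk.2
  have := relIndex_eq_one.2 hle
  rw [hX.relIndex_XIcc_succ hp.ne_zero h] at this
  exact hp.one_lt.ne' this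

theorem XIcc_inf_XIcc_succ (hX : IsZSystem p x) (hp : p.Prime) {a b c : ℤ} (hab : a ≤ b)
    (hbc : b ≤ c) : XIcc x a b ⊓ XIcc x (a + 1) c = XIcc x (a + 1) b := by
  have hD : XIcc x (a + 1) b ≤ XIcc x a b ⊓ XIcc x (a + 1) c :=
    le_inf (XIcc_mono_s15 (by omega) le_rfl) (XIcc_mono_s15 le_rfl hbc)
  refine le_antisymm ?_ hD
  have hprime : ((XIcc x (a + 1) b).relIndex (XIcc x a b)).Prime := by
    rwa [hX.relIndex_XIcc_succ hp.ne_zero hab]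
  refine (le_or_le_of_relIndex_prime hD inf_le_left hprime).resolve_right fun h => ?_
  exact hX.apply_notMem_XIcc_succ hp (hab.trans hbc) (h (apply_mem_XIcc le_rfl hab)).2

theorem exists_mulEquiv_apply_eq (hX : IsZSystem p x) (i : ℤ) :
    ∃ e : X ≃* X, ∀ n, e (x n) = x (n + 2 * i) := by
  obtain ⟨t, ht⟩ := hX.exists_shift
  refine ⟨t ^ i, ?_⟩
  induction i using Int.induction_on with
  | zero => simp
  | succ i ih =>
    intro n
    rw [zpow_add_one, MulAut.mul_apply, ht, ih]
    ring_nf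
  | pred i ih =>
    intro n
    have hinv : t.symm (x n) = x (n - 2) := by rw [MulEquiv.symm_apply_eq, ht, sub_add_cancel]
    rw [zpow_sub_one, MulAut.mul_apply, MulAut.inv_apply, hinv, ih]
    ring_nf

theorem exists_sup_XIcc_neg_self_eq_top (hX : IsZSystem p x) (N : Subgroup X) [N.Normal]
    (hN : N.index ≠ 0) : ∃ s : ℕ, N ⊔ XIcc x (-s) s = ⊤ := by
  have : N.FiniteIndex := ⟨hN⟩
  have hsup : (⊤ : Subgroup (X ⧸ N)) ≤ ⨆ s : ℕ, (XIcc x (-s) s).map (QuotientGroup.mk' N) := by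
    rw [← Subgroup.map_iSup, hX.iSup_XIcc_neg_self,
      map_top_of_surjective _ (QuotientGroup.mk'_surjective N)]
  obtain ⟨s, hs⟩ :=
    exists_le_of_le_iSup (fun _ _ h => map_mono (monotone_XIcc_neg_self h)) hsup
  refine ⟨s, top_le_iff.1 ?_⟩
  rw [← QuotientGroup.comap_map_mk', ← comap_top (QuotientGroup.mk' N)]
  exact comap_mono hs

theorem exists_sup_XIcc_eq_top (hX : IsZSystem p x) (N : Subgroup X) [N.Characteristic]
    (hN : N.index ≠ 0) : ∃ S : ℕ, ∀ a b : ℤ, a + S ≤ b → N ⊔ XIcc x a b = ⊤ := by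
  obtain ⟨s, hs⟩ := hX.exists_sup_XIcc_neg_self_eq_top N hN
  refine ⟨2 * s + 1, fun a b hab => top_le_iff.1 ?_⟩
  -- shift `[-s, s]` by an even amount into `[a, a + 2s + 1]`
  obtain ⟨e, he⟩ := hX.exists_mulEquiv_apply_eq ((a + s + 1) / 2)
  have hmap := congrArg (map e.toMonoidHom) hs
  rw [Subgroup.map_sup, characteristic_iff_map_eq.1 ‹_› e, map_XIcc_of_apply_eq e he,
    map_top_of_surjective _ e.surjective] at hmap
  rw [← hmap]
  exact sup_le_sup_left (XIcc_mono_s15 (by omega) (by omega)) N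

section Perfect

variable {N : Subgroup X} {S : ℕ}

theorem card_inf_XIcc_eq_mul (hX : IsZSystem p x) (hp : p ≠ 0) [N.Normal]
    (hS : ∀ a b : ℤ, a + S ≤ b → N ⊔ XIcc x a b = ⊤) {a b : ℤ} (h : a + S + 1 ≤ b) :
    Nat.card (N ⊓ XIcc x a b : Subgroup X) = p * Nat.card (N ⊓ XIcc x (a + 1) b : Subgroup X) := by
  have h1 := card_inf_mul_index_of_sup_eq_top (hS a b (by omega))
  have h2 := card_inf_mul_index_of_sup_eq_top (hS (a + 1) b (by omega))
  have hN : N.index ≠ 0 := fun h0 => hX.card_XIcc_ne_zero hp a b (by rw [← h1, h0, mul_zero])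
  rw [hX.card_XIcc_eq_mul (by omega), ← h2, ← mul_assoc] at h1
  exact Nat.eq_of_mul_eq_mul_right (Nat.pos_of_ne_zero hN) h1

theorem relIndex_inf_XIcc_succ (hX : IsZSystem p x) (hp : p ≠ 0) [N.Normal]
    (hS : ∀ a b : ℤ, a + S ≤ b → N ⊔ XIcc x a b = ⊤) {a b : ℤ} (h : a + S + 1 ≤ b) :
    (N ⊓ XIcc x (a + 1) b).relIndex (N ⊓ XIcc x a b) = p := by
  have hcard := card_inf_mul_index_of_sup_eq_top (hS (a + 1) b (by omega))
  refine relIndex_eq_of_card_eq_mul (inf_le_inf_left N (XIcc_mono_s15 (by omega) le_rfl)) ?_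
    (hX.card_inf_XIcc_eq_mul hp hS h)
  exact left_ne_zero_of_mul (hcard ▸ hX.card_XIcc_ne_zero hp _ _)

/-- `N ⊓ X_{a+1,b}` has prime index in `N ⊓ X_{a,b}`, hence is maximal there, and it does not
contain `N ⊓ X_{a,a+S+1}`. -/
theorem inf_XIcc_le_sup (hX : IsZSystem p x) (hp : p.Prime) [N.Normal]
    (hS : ∀ a b : ℤ, a + S ≤ b → N ⊔ XIcc x a b = ⊤) {a b : ℤ} (h : a + S + 1 ≤ b) :
    N ⊓ XIcc x a b ≤ N ⊓ XIcc x a (a + S + 1) ⊔ N ⊓ XIcc x (a + 1) b := by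
  have hDA : N ⊓ XIcc x (a + 1) b ≤ N ⊓ XIcc x a b :=
    inf_le_inf_left N (XIcc_mono_s15 (by omega) le_rfl)
  have hCA := sup_le (inf_le_inf_left N (XIcc_mono_s15 le_rfl h)) hDA
  have hprime : ((N ⊓ XIcc x (a + 1) b).relIndex (N ⊓ XIcc x a b)).Prime := by
    rwa [hX.relIndex_inf_XIcc_succ hp.ne_zero hS h]
  refine (le_or_le_of_relIndex_prime le_sup_right hCA hprime).resolve_left fun hCD => ?_
  have hle : N ⊓ XIcc x a (a + S + 1) ≤ N ⊓ XIcc x (a + 1) (a + S + 1) := by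
    rw [← hX.XIcc_inf_XIcc_succ hp (by omega) h]
    exact fun g hg => ⟨hg.1, hg.2, (hCD (mem_sup_left hg)).2⟩
  have := relIndex_eq_one.2 hle
  rw [hX.relIndex_inf_XIcc_succ hp.ne_zero hS le_rfl] at this
  exact hp.one_lt.ne' this

theorem exists_le_commutator_inf_XIcc_neg_self (hX : IsZSystem p x) (hN : ⁅N, N⁆ = N)
    {A : Subgroup X} [Finite A] (hA : A ≤ N) :
    ∃ r : ℕ, A ≤ ⁅N ⊓ XIcc x (-r) r, N ⊓ XIcc x (-r) r⁆ := by
  have hF : Monotone fun s : ℕ => N ⊓ XIcc x (-s) s :=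
    fun _ _ h => inf_le_inf_left N (monotone_XIcc_neg_self h)
  have hNF : N ≤ ⨆ s : ℕ, N ⊓ XIcc x (-s) s := fun g hg => by
    obtain ⟨s, hs⟩ := hX.exists_mem_XIcc g
    exact le_iSup (fun s : ℕ => N ⊓ XIcc x (-s) s) s ⟨hg, hs⟩
  refine exists_le_of_le_iSup (fun _ _ h => commutator_mono (hF h) (hF h)) ?_
  calc A ≤ ⁅N, N⁆ := hA.trans hN.ge
    _ ≤ _ := (commutator_mono hNF hNF).trans (commutator_iSup_le_of_monotone hF)

theorem exists_inf_XIcc_le_commutator_of_length (hX : IsZSystem p x) (hp : p ≠ 0)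
    [N.Characteristic] (hN : ⁅N, N⁆ = N) (L : ℕ) : ∃ r : ℕ, ∀ c : ℤ,
      N ⊓ XIcc x c (c + L) ≤ ⁅N ⊓ XIcc x (c - r) (c + L + r), N ⊓ XIcc x (c - r) (c + L + r)⁆ := by
  have : Finite (N ⊓ XIcc x (-(L + 1 : ℕ)) (L + 1 : ℕ) : Subgroup X) :=
    hX.finite_of_le_XIcc hp inf_le_right
  obtain ⟨r, hr⟩ := hX.exists_le_commutator_inf_XIcc_neg_self hN
    (A := N ⊓ XIcc x (-(L + 1 : ℕ)) (L + 1 : ℕ)) inf_le_left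
  refine ⟨r + 1, fun c => ?_⟩
  -- translate the window around `0` by an even amount so that it covers `[c, c + L]`
  obtain ⟨e, he⟩ := hX.exists_mulEquiv_apply_eq (c / 2)
  have hmap := map_mono (f := e.toMonoidHom) hr
  rw [map_commutator, map_inf_XIcc_of_apply_eq N e he, map_inf_XIcc_of_apply_eq N e he] at hmap
  exact (inf_le_inf_left N (XIcc_mono_s15 (by omega) (by omega))).trans
    (hmap.trans (commutator_inf_XIcc_mono N (by omega) (by omega)))

theorem exists_inf_XIcc_le_commutator (hX : IsZSystem p x) (hp : p.Prime) [N.Characteristic]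
    (hN : ⁅N, N⁆ = N) (hS : ∀ a b : ℤ, a + S ≤ b → N ⊔ XIcc x a b = ⊤) : ∃ r : ℕ, ∀ a b : ℤ,
      a + S + 1 ≤ b →
        N ⊓ XIcc x a b ≤ ⁅N ⊓ XIcc x (a - r) (b + r), N ⊓ XIcc x (a - r) (b + r)⁆ := by
  obtain ⟨r, hr⟩ := hX.exists_inf_XIcc_le_commutator_of_length hp.ne_zero hN (S + 1)
  push_cast [← add_assoc] at hr
  refine ⟨r, fun a b hab => ?_⟩
  obtain ⟨n, hn⟩ : ∃ n : ℕ, b = a + S + 1 + n := ⟨(b - a - S - 1).toNat, by omega⟩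
  induction n generalizing a with
  | zero =>
    obtain rfl : b = a + S + 1 := by omega
    exact hr a
  | succ n ih =>
    refine (hX.inf_XIcc_le_sup hp hS hab).trans (sup_le ?_ ?_)
    · exact (hr a).trans (commutator_inf_XIcc_mono N (by omega) (by omega))
    · exact (ih (a + 1) (by omega) (by omega)).trans
        (commutator_inf_XIcc_mono N (by omega) (by omega))

end Perfect

theorem commutator_ne_self (hX : IsZSystem p x) (hp : p.Prime) (N : Subgroup X)
    [N.Characteristic] (hN : N.index ≠ 0) : ⁅N, N⁆ ≠ N := by
  intro hperf
  obtain ⟨S, hS⟩ := hX.exists_sup_XIcc_eq_top N hN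
  obtain ⟨r, hr⟩ := hX.exists_inf_XIcc_le_commutator hp hperf hS
  obtain ⟨I, hI⟩ := Nat.exists_mul_add_lt_two_pow (2 * r) (S + 2)
  have hle := le_lowerCentralSeries_of_le_commutator (W := fun a b => N ⊓ XIcc x a b)
    (L := S + 1) (Nat.cast_nonneg r) (fun a b h => hr a b (by linarith)) I
    (a := 0) (b := S + 1) (by simp)
  simp only [← Nat.cast_mul] at hle
  have hcard : Nat.card (N ⊓ XIcc x (0 - (I * r : ℕ)) (S + 1 + (I * r : ℕ)) : Subgroup X) ∣
      p ^ (2 * r * I + (S + 2)) := by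
    refine (card_dvd_of_le inf_le_right).trans (dvd_of_eq ?_)
    rw [hX.card_XIcc (by omega)]
    congr 1
    rw [mul_assoc, mul_comm r]
    omega
  have hbot : N ⊓ XIcc x 0 (S + 1) = ⊥ := eq_bot_iff.2 <| hle.trans <|
    (Subgroup.lowerCentralSeries_antitone _ (by omega)).trans
      (lowerCentralSeries_eq_bot_of_card_dvd hp hcard).le
  have := hX.relIndex_inf_XIcc_succ hp.ne_zero hS (a := 0) (b := S + 1) (by simp)
  rw [hbot, relIndex_bot_right] at this
  exact hp.one_lt.ne' this.symm

theorem le_relIndex_derivedSeries_succ (hX : IsZSystem p x) (hp : p.Prime) {j : ℕ}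
    (hj : (derivedSeries X (j + 1)).index ≠ 0) :
    p ≤ (derivedSeries X (j + 1)).relIndex (derivedSeries X j) := by
  have : Fact p.Prime := ⟨hp⟩
  have : (derivedSeries X (j + 1)).FiniteIndex := ⟨hj⟩
  have hle := derivedSeries_antitone (G := X) j.le_succ
  obtain ⟨n, hn⟩ := hX.isPGroup.index (derivedSeries X (j + 1))
  have hdvd : (derivedSeries X (j + 1)).relIndex (derivedSeries X j) ∣ p ^ n :=
    hn ▸ relIndex_dvd_index_of_le hle
  refine Nat.le_of_dvd (Nat.pos_of_ne_zero (ne_zero_of_dvd_ne_zero (pow_ne_zero n hp.ne_zero) hdvd))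
    (prime_dvd_relIndex hp hdvd fun h => ?_)
  exact hX.commutator_ne_self hp (derivedSeries X j)
    (ne_zero_of_dvd_ne_zero hj (index_dvd_of_le hle)) (le_antisymm hle h)

theorem pow_le_index_derivedSeries (hX : IsZSystem p x) (hp : p.Prime) {k : ℕ}
    (hk : (derivedSeries X k).index ≠ 0) : p ^ k ≤ (derivedSeries X k).index := by
  induction k with
  | zero => simp
  | succ k ih =>
    have hle := derivedSeries_antitone (G := X) k.le_succ
    rw [← relIndex_mul_index hle, pow_succ, mul_comm]
    exact Nat.mul_le_mul (hX.le_relIndex_derivedSeries_succ hp hk)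
      (ih (ne_zero_of_dvd_ne_zero hk (index_dvd_of_le hle)))

end IsZSystem

/-- In a ℤ-system of prime order `p`, the `k`-th derived subgroup `X^(k)` has index at
least `p^k` in `X` (where index `0` means infinite index). -/
theorem derived_series_index_ge (p : ℕ) (hp : p.Prime) {X : Type*} [Group X]
    (x : ℤ → X) (hX : IsZSystem p x) :
    ∀ k : ℕ, (derivedSeries X k).index = 0 ∨ p ^ k ≤ (derivedSeries X k).index :=
  fun _ => or_iff_not_imp_left.2 (hX.pow_le_index_derivedSeries hp)
end
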